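/- Let H₁, H₂ be sets of hypotheses over a common alphabet. Then cl_{H₁ ∪ H₂} = cl_{H₂} ∘ cl_{H₁} if and only if cl_{H₁} ∘ cl_{H₂} ⊆ cl_{H₂} ∘ cl_{H₁}. -/

import Mathlib

/-!
For a monotone `s`, `lstar s` is the least closure operator above `s`, and
`lstar (s ⊔ t)` is the least closure above both `lstar s` and `lstar t`. The composite
`lstar t ∘ lstar s` always lies below it, so equality amounts to `lstar t (lstar s x)` being
closed under `s`; this is exactly what `lstar s ∘ lstar t ≤ lstar t ∘ lstar s` provides.
The hypotheses of `H₁ ∪ H₂` contribute the pointwise union of the one-step functions.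
-/

/-- The least (pre)fixpoint of `y ↦ x ⊔ s y` (Knaster–Tarski); for monotone `s`
this gives the least closure above `s`. -/
def lstar {X : Type*} [CompleteLattice X] (s : X → X) (x : X) : X :=
  sInf {y | x ⊔ s y ≤ y}

/-- The one-step function associated with a set `H` of hypotheses `e ≤ f`
(pairs of regular expressions): it adds `u·⟦e⟧·v` whenever `u·⟦f⟧·v ⊆ L`. -/
def onestep {α : Type*} (H : Set (RegularExpression α × RegularExpression α))
    (L : Language α) : Language α :=
  {w | ∃ p ∈ H, ∃ u v : List α,
    (∀ x ∈ p.2.matches', u ++ x ++ v ∈ L) ∧ ∃ x ∈ p.1.matches', w = u ++ x ++ v}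

/-- The `H`-closure of a language: the least closure above the one-step function of `H`. -/
def clH {α : Type*} (H : Set (RegularExpression α × RegularExpression α)) :
    Language α → Language α :=
  lstar (onestep H)

section lstar

variable {X : Type*} [CompleteLattice X] {s t : X → X}

lemma le_lstar (s : X → X) (x : X) : x ≤ lstar s x :=
  le_sInf fun _ hy => le_sup_left.trans hy

lemma lstar_le {x y : X} (h : x ⊔ s y ≤ y) : lstar s x ≤ y := sInf_le h

lemma map_lstar_le (hs : Monotone s) (x : X) : s (lstar s x) ≤ lstar s x :=
  le_sInf fun _ hy => (hs (sInf_le hy)).trans (le_sup_right.trans hy)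

lemma map_le_lstar (hs : Monotone s) (x : X) : s x ≤ lstar s x :=
  (hs (le_lstar s x)).trans (map_lstar_le hs x)

lemma lstar_mono (hs : Monotone s) : Monotone (lstar s) := fun _ _ h =>
  lstar_le (sup_le (h.trans (le_lstar s _)) (map_lstar_le hs _))

lemma lstar_lstar (hs : Monotone s) (x : X) : lstar s (lstar s x) = lstar s x :=
  le_antisymm (lstar_le (sup_le le_rfl (map_lstar_le hs x))) (le_lstar s _)

lemma lstar_le_lstar (h : s ≤ t) (x : X) : lstar s x ≤ lstar t x :=
  sInf_le_sInf fun _ hy => (sup_le_sup_left (h _) x).trans hy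

lemma lstar_comp_le_lstar_sup (hs : Monotone s) (ht : Monotone t) (x : X) :
    lstar t (lstar s x) ≤ lstar (s ⊔ t) x :=
  calc lstar t (lstar s x) ≤ lstar (s ⊔ t) (lstar (s ⊔ t) x) :=
        (lstar_le_lstar le_sup_right _).trans (lstar_mono (hs.sup ht)
          (lstar_le_lstar le_sup_left x))
    _ = lstar (s ⊔ t) x := lstar_lstar (hs.sup ht) x

theorem lstar_sup_eq_comp_iff (hs : Monotone s) (ht : Monotone t) :
    (∀ x, lstar (s ⊔ t) x = lstar t (lstar s x)) ↔
      ∀ x, lstar s (lstar t x) ≤ lstar t (lstar s x) := by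
  constructor
  · intro h x
    rw [← h, sup_comm]
    exact lstar_comp_le_lstar_sup ht hs x
  · intro h x
    refine le_antisymm (lstar_le (sup_le ?_ (sup_le ?_ (map_lstar_le ht _))))
      (lstar_comp_le_lstar_sup hs ht x)
    · exact (le_lstar s x).trans (le_lstar t _)
    · calc s (lstar t (lstar s x)) ≤ lstar s (lstar t (lstar s x)) := map_le_lstar hs _
        _ ≤ lstar t (lstar s (lstar s x)) := h _
        _ = lstar t (lstar s x) := by rw [lstar_lstar hs]

end lstar

section onestep

variable {α : Type*}

lemma onestep_mono (H : Set (RegularExpression α × RegularExpression α)) :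
    Monotone (onestep H) := by
  rintro L L' h w ⟨p, hp, u, v, hf, x, hx, hw⟩
  exact ⟨p, hp, u, v, fun y hy => h (hf y hy), x, hx, hw⟩

lemma onestep_union (H₁ H₂ : Set (RegularExpression α × RegularExpression α)) :
    onestep (H₁ ∪ H₂) = onestep H₁ ⊔ onestep H₂ := by
  funext L
  ext w
  simp only [onestep, Set.mem_union, or_and_right, exists_or]
  rfl

end onestep

/-- `cl_{H₁ ∪ H₂} = cl_{H₂} ∘ cl_{H₁}` iff `cl_{H₁} ∘ cl_{H₂} ≤ cl_{H₂} ∘ cl_{H₁}`. -/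
theorem clH_union_eq_comp_iff {α : Type*}
    (H₁ H₂ : Set (RegularExpression α × RegularExpression α)) :
    (∀ L : Language α, clH (H₁ ∪ H₂) L = clH H₂ (clH H₁ L)) ↔
      (∀ L : Language α, clH H₁ (clH H₂ L) ≤ clH H₂ (clH H₁ L)) := by
  simp only [clH, onestep_union]
  exact lstar_sup_eq_comp_iff (onestep_mono H₁) (onestep_mono H₂)
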